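/- Riemann's bilinear relations in genus g: for all σ, ε ∈ 𝔽₂^g and τ ∈ ℍ_g, Θ[σ](τ)·Θ[σ+ε](τ) = 2^{-g} Σ_{ε'∈𝔽₂^g} (-1)^{ᵗσε'} θ[ε;ε'](τ)², where Θ[a](τ) = θ[a;0](2τ). -/

import Mathlib

/-!
Both sides are absolutely convergent double series over `ℤ^g × ℤ^g` (as `Im τ > 0`), so they may
be rearranged freely. On the left, substituting `u = (p + σ/2) + (q + (σ+ε)/2)` and
`w = (p + σ/2) - (q + (σ+ε)/2)` and using the parallelogram law
`Q(a) + Q(b) = ½ Q(a + b) + ½ Q(a - b)` for `Q(x) = ᵗx τ x` turns `Θ[σ] Θ[σ+ε]` into the sum of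
`e(½ Q(u) + ½ Q(w))` over the pairs `u = n + ε/2`, `w = m + ε/2` with `n + m + σ + ε` even.
On the right, expanding the squares and summing the characters `(-1)^{σ·ε'} e((u + w)·ε'/2)` over
`ε' ∈ 𝔽₂^g` gives `∏ᵢ (1 + (-1)^{σᵢ + nᵢ + mᵢ + εᵢ})`, which is `2^g` on exactly those pairs
and `0` elsewhere.
-/

open Matrix Complex

variable (g : ℕ)

/-- The theta constant with characteristic m = (m'; m'') ∈ 𝔽₂^{2g} (canonical 0,1 lifts):
θ[m';m''](τ) = Σ_{n∈ℤ^g} exp(2πi(½·ᵗ(n+m'/2)·τ·(n+m'/2) + ᵗ(n+m'/2)·(m''/2))). -/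
noncomputable def thetaConst (m' m'' : Fin g → ZMod 2)
    (τ : Matrix (Fin g) (Fin g) ℂ) : ℂ :=
  ∑' n : Fin g → ℤ,
    Complex.exp (2 * Real.pi * Complex.I *
      ((1 / 2) * ((fun i => (n i : ℂ) + ((m' i).val : ℂ) / 2) ⬝ᵥ
          (τ *ᵥ fun i => (n i : ℂ) + ((m' i).val : ℂ) / 2)) +
        (fun i => (n i : ℂ) + ((m' i).val : ℂ) / 2) ⬝ᵥ (fun i => ((m'' i).val : ℂ) / 2)))

/-- The second order theta constant Θ[a](τ) = θ[a;0](2τ). -/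
noncomputable def secondOrderTheta (a : Fin g → ZMod 2)
    (τ : Matrix (Fin g) (Fin g) ℂ) : ℂ :=
  thetaConst g a 0 ((2 : ℂ) • τ)

open Real

theorem exists_pos_mul_norm_sq_le_of_homogeneous {E : Type*} [NormedAddCommGroup E]
    [NormedSpace ℝ E] [FiniteDimensional ℝ E] {q : E → ℝ} (hq : Continuous q)
    (hsmul : ∀ (t : ℝ) x, q (t • x) = t ^ 2 * q x) (hpos : ∀ x ≠ 0, 0 < q x) :
    ∃ c > 0, ∀ x, c * ‖x‖ ^ 2 ≤ q x := by
  have hq0 : q 0 = 0 := by simpa using hsmul 0 0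
  rcases subsingleton_or_nontrivial E with hE | hE
  · exact ⟨1, one_pos, fun x => by simp [Subsingleton.elim x 0, hq0]⟩
  obtain ⟨x₀, hx₀, hmin⟩ := (isCompact_sphere (0 : E) 1).exists_isMinOn
    (NormedSpace.sphere_nonempty.mpr zero_le_one) hq.continuousOn
  refine ⟨q x₀, hpos x₀ (ne_zero_of_mem_unit_sphere ⟨x₀, hx₀⟩), fun x => ?_⟩
  rcases eq_or_ne x 0 with rfl | hx
  · simp [hq0]
  have hmin_x : q x₀ ≤ ‖x‖⁻¹ ^ 2 * q x := by
    rw [← hsmul]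
    exact hmin (by simp [norm_smul, hx])
  calc q x₀ * ‖x‖ ^ 2 ≤ ‖x‖⁻¹ ^ 2 * q x * ‖x‖ ^ 2 := by gcongr
    _ = q x := by field_simp

theorem Matrix.PosDef.exists_pos_mul_sum_sq_le {ι : Type*} [Fintype ι] {Y : Matrix ι ι ℝ}
    (hY : Y.PosDef) : ∃ c > 0, ∀ x : ι → ℝ, c * ∑ i, x i ^ 2 ≤ x ⬝ᵥ (Y *ᵥ x) := by
  obtain ⟨c, hc, hle⟩ := exists_pos_mul_norm_sq_le_of_homogeneous
    (q := fun v : EuclideanSpace ℝ ι => v.ofLp ⬝ᵥ (Y *ᵥ v.ofLp))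
    (by fun_prop)
    (fun t x => by
      simp only [WithLp.ofLp_smul, mulVec_smul, dotProduct_smul, smul_dotProduct, smul_eq_mul]
      ring)
    (fun x hx => by simpa using hY.dotProduct_mulVec_pos (x := x.ofLp) (by simpa using hx))
  refine ⟨c, hc, fun x => ?_⟩
  simpa [EuclideanSpace.real_norm_sq_eq] using hle (WithLp.toLp 2 x)

theorem summable_exp_neg_mul_add_sq {a : ℝ} (ha : 0 < a) (c : ℝ) :
    Summable fun n : ℤ => rexp (-a * (n + c) ^ 2) := by
  have hθ := (summable_jacobiTheta₂_term_iff (↑(a * c / π) * I) (↑(a / π) * I)).mpr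
    (by simpa using div_pos ha pi_pos)
  refine (hθ.norm.mul_right (rexp (-a * c ^ 2))).congr fun n => ?_
  rw [norm_jacobiTheta₂_term, ← Real.exp_add, mul_I_im, mul_I_im, ofReal_re, ofReal_re]
  congr 1
  field_simp
  ring

theorem summable_prod_pi_of_nonneg {β : Type*} :
    ∀ {n : ℕ} (f : Fin n → β → ℝ), (∀ i b, 0 ≤ f i b) → (∀ i, Summable (f i)) →
      Summable fun v : Fin n → β => ∏ i, f i (v i)
  | 0, _, _, _ => .of_finite
  | n + 1, f, hf, hs => by
    have hprod := (hs 0).mul_of_nonneg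
      (summable_prod_pi_of_nonneg (fun i => f i.succ) (fun i => hf i.succ) (fun i => hs i.succ))
      (hf 0) (fun v => Finset.prod_nonneg fun i _ => hf i.succ _)
    refine ((Fin.consEquiv fun _ => β).summable_iff).mp (hprod.congr fun bv => ?_)
    simp [Fin.consEquiv, Fin.prod_univ_succ]

theorem Matrix.PosDef.summable_exp_neg_dotProduct_mulVec {n : ℕ}
    {Y : Matrix (Fin n) (Fin n) ℝ} (hY : Y.PosDef) (c : Fin n → ℝ) :
    Summable fun v : Fin n → ℤ =>
      rexp (-((Int.cast ∘ v + c) ⬝ᵥ (Y *ᵥ (Int.cast ∘ v + c)))) := by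
  obtain ⟨a, ha, hle⟩ := hY.exists_pos_mul_sum_sq_le
  refine (summable_prod_pi_of_nonneg (fun i (k : ℤ) => rexp (-a * (k + c i) ^ 2))
    (fun _ _ => (exp_pos _).le) (fun i => summable_exp_neg_mul_add_sq ha (c i))).of_nonneg_of_le
    (fun _ => (exp_pos _).le) fun v => ?_
  rw [← Real.exp_sum, exp_le_exp, ← Finset.mul_sum, neg_mul, neg_le_neg_iff]
  exact hle _

theorem ZMod.natCast_val_add_of_two {R : Type*} [CommRing R] (a b : ZMod 2) :
    (((a + b).val : ℕ) : R) = a.val + b.val - 2 * a.val * b.val := by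
  have h : (a + b).val + 2 * a.val * b.val = a.val + b.val := by revert a b; decide
  have hR := congrArg (Nat.cast : ℕ → R) h
  push_cast at hR
  linear_combination hR

namespace SiegelTheta

variable {g}

noncomputable def e (z : ℂ) : ℂ := cexp (2 * π * I * z)

lemma e_add (z w : ℂ) : e (z + w) = e z * e w := by
  rw [e, e, e, mul_add, Complex.exp_add]

lemma e_sum {ι : Type*} (s : Finset ι) (f : ι → ℂ) : e (∑ i ∈ s, f i) = ∏ i ∈ s, e (f i) := by
  rw [e, Finset.mul_sum, Complex.exp_sum]
  rfl

lemma e_intCast_div_two (k : ℤ) : e (k / 2) = (-1) ^ k := by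
  rw [e, show 2 * π * I * (k / 2) = k * (π * I) by ring, Complex.exp_int_mul, Complex.exp_pi_mul_I]

lemma norm_e (z : ℂ) : ‖e z‖ = rexp (-(2 * π * z.im)) := by
  simp [e, Complex.norm_exp]

def Q (τ : Matrix (Fin g) (Fin g) ℂ) (x : Fin g → ℂ) : ℂ := x ⬝ᵥ (τ *ᵥ x)

lemma Q_add_add_Q_sub (τ : Matrix (Fin g) (Fin g) ℂ) (u v : Fin g → ℂ) :
    Q τ (u + v) + Q τ (u - v) = 2 * Q τ u + 2 * Q τ v := by
  simp only [Q, mulVec_add, mulVec_sub, dotProduct_add, dotProduct_sub, add_dotProduct,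
    sub_dotProduct]
  ring

lemma Q_smul (τ : Matrix (Fin g) (Fin g) ℂ) (c : ℂ) (x : Fin g → ℂ) : Q (c • τ) x = c * Q τ x := by
  rw [Q, Q, smul_mulVec, dotProduct_smul, smul_eq_mul]

lemma im_Q_ofReal (τ : Matrix (Fin g) (Fin g) ℂ) (x : Fin g → ℝ) :
    (Q τ (ofReal ∘ x)).im = x ⬝ᵥ (τ.map im *ᵥ x) := by
  simp [Q, dotProduct, mulVec, Complex.im_sum, Finset.mul_sum]

def lift (a : Fin g → ZMod 2) : Fin g → ℤ := fun i => (a i).val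

noncomputable def shiftPt (a : Fin g → ZMod 2) (n : Fin g → ℤ) : Fin g → ℂ :=
  fun i => n i + (a i).val / 2

noncomputable def halfVec (b : Fin g → ZMod 2) : Fin g → ℂ := fun i => (b i).val / 2

section

variable (τ : Matrix (Fin g) (Fin g) ℂ)

lemma thetaConst_eq (a b : Fin g → ZMod 2) :
    thetaConst g a b τ =
      ∑' n, e ((1 / 2) * Q τ (shiftPt a n) + shiftPt a n ⬝ᵥ halfVec b) := rfl

lemma thetaConst_term_two_smul (a : Fin g → ZMod 2) (n : Fin g → ℤ) :
    e ((1 / 2) * Q ((2 : ℂ) • τ) (shiftPt a n) + shiftPt a n ⬝ᵥ halfVec 0) =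
      e (Q τ (shiftPt a n)) := by
  have : halfVec (0 : Fin g → ZMod 2) = 0 := by ext; simp [halfVec]
  rw [this, dotProduct_zero, add_zero, Q_smul, ← mul_assoc]
  norm_num

lemma secondOrderTheta_eq (a : Fin g → ZMod 2) :
    secondOrderTheta g a τ = ∑' n, e (Q τ (shiftPt a n)) := by
  rw [secondOrderTheta, thetaConst_eq]
  exact tsum_congr (thetaConst_term_two_smul τ a)

variable {τ}

lemma summable_norm_thetaConst_term (hτ : (τ.map im).PosDef) (a b : Fin g → ZMod 2) :
    Summable fun n => ‖e ((1 / 2) * Q τ (shiftPt a n) + shiftPt a n ⬝ᵥ halfVec b)‖ := by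
  set c : Fin g → ℝ := fun i => ((a i).val : ℝ) / 2
  have hx : ∀ n, shiftPt a n = ofReal ∘ (Int.cast ∘ n + c) := fun n => by
    ext i
    simp only [c, shiftPt, Function.comp_apply, Pi.add_apply]
    push_cast
    rfl
  refine ((hτ.smul pi_pos).summable_exp_neg_dotProduct_mulVec c).congr fun n => ?_
  have him : (shiftPt a n ⬝ᵥ halfVec b).im = 0 := by
    simp [hx, halfVec, dotProduct, Complex.im_sum, -ZMod.natCast_val]
  have hhalf : ∀ z : ℂ, (1 / 2 * z).im = z.im / 2 := fun z => by
    rw [one_div, ← ofReal_ofNat, ← ofReal_inv, im_ofReal_mul]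
    ring
  rw [norm_e, add_im, him, add_zero, hhalf, hx, im_Q_ofReal, smul_mulVec, dotProduct_smul,
    smul_eq_mul]
  ring_nf

lemma summable_norm_secondOrderTheta_term (hτ : (τ.map im).PosDef) (a : Fin g → ZMod 2) :
    Summable fun n => ‖e (Q τ (shiftPt a n))‖ := by
  have h2τ : (((2 : ℂ) • τ).map im).PosDef := by
    convert hτ.smul (two_pos (α := ℝ)) using 1
    ext; simp
  simpa only [thetaConst_term_two_smul] using summable_norm_thetaConst_term h2τ a 0

end

variable (σ ε : Fin g → ZMod 2)

-- The integer corrections come from `σ + (σ + ε) - ε = 2σ(1 - ε)` and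
-- `σ - (σ + ε) - ε = 2(σε - ε)` for the `0, 1` lifts of `σ, ε`.
def changeVars (pq : (Fin g → ℤ) × (Fin g → ℤ)) : (Fin g → ℤ) × (Fin g → ℤ) :=
  (pq.1 + pq.2 + (lift σ - lift σ * lift ε), pq.1 - pq.2 + (lift σ * lift ε - lift ε))

lemma changeVars_injective : Function.Injective (changeVars σ ε) := by
  rintro ⟨p, q⟩ ⟨p', q'⟩ h
  simp only [changeVars, Prod.mk.injEq, add_left_inj] at h
  obtain ⟨h₁, h₂⟩ := h
  refine Prod.ext (funext fun i => ?_) (funext fun i => ?_) <;>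
  · have := congrFun h₁ i
    have := congrFun h₂ i
    simp only [Pi.add_apply, Pi.sub_apply] at *
    omega

lemma shiftPt_changeVars_fst (p q : Fin g → ℤ) :
    shiftPt ε (changeVars σ ε (p, q)).1 = shiftPt σ p + shiftPt (σ + ε) q := by
  ext i
  simp only [shiftPt, changeVars, lift, Pi.add_apply, Pi.sub_apply, Pi.mul_apply,
    ZMod.natCast_val_add_of_two]
  push_cast
  ring

lemma shiftPt_changeVars_snd (p q : Fin g → ℤ) :
    shiftPt ε (changeVars σ ε (p, q)).2 = shiftPt σ p - shiftPt (σ + ε) q := by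
  ext i
  simp only [shiftPt, changeVars, lift, Pi.add_apply, Pi.sub_apply, Pi.mul_apply,
    ZMod.natCast_val_add_of_two]
  push_cast
  ring

lemma mem_range_changeVars (n m : Fin g → ℤ) (h : ∀ i, Even (lift σ i + n i + m i + lift ε i)) :
    (n, m) ∈ Set.range (changeVars σ ε) := by
  choose k hk using h
  refine ⟨(k - lift σ, n - (k - lift σ) - (lift σ - lift σ * lift ε)), ?_⟩
  refine Prod.ext (funext fun i => ?_) (funext fun i => ?_) <;>
    simp only [changeVars, Pi.add_apply, Pi.sub_apply, Pi.mul_apply]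
  · ring
  · linear_combination -hk i

noncomputable def charSum (n m : Fin g → ℤ) : ℂ :=
  ∑ ε' : Fin g → ZMod 2,
    (-1 : ℂ) ^ (lift σ ⬝ᵥ lift ε') * e ((shiftPt ε n + shiftPt ε m) ⬝ᵥ halfVec ε')

lemma charSum_eq_prod (n m : Fin g → ℤ) :
    charSum σ ε n m = ∏ i, (1 + (-1 : ℂ) ^ (lift σ i + n i + m i + lift ε i)) := by
  classical
  have hterm : ∀ ε' : Fin g → ZMod 2,
      (-1 : ℂ) ^ (lift σ ⬝ᵥ lift ε') * e ((shiftPt ε n + shiftPt ε m) ⬝ᵥ halfVec ε') =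
        ∏ i, e ((((lift σ i + n i + m i + lift ε i) * (ε' i).val : ℤ) : ℂ) / 2) := by
    intro ε'
    rw [← e_intCast_div_two, ← e_add, ← e_sum]
    congr 1
    simp only [dotProduct, lift, shiftPt, halfVec, Pi.add_apply]
    push_cast
    rw [Finset.sum_div, ← Finset.sum_add_distrib]
    exact Finset.sum_congr rfl fun i _ => by ring
  rw [charSum, Finset.sum_congr rfl fun ε' _ => hterm ε', ← Fintype.prod_sum fun i (x : ZMod 2) =>
    e ((((lift σ i + n i + m i + lift ε i) * x.val : ℤ) : ℂ) / 2)]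
  refine Finset.prod_congr rfl fun i _ => ?_
  have hZ2 : ∀ x : ZMod 2, x = 0 ∨ x = 1 := by decide
  rw [Fintype.sum_eq_add 0 1 (by decide) fun x hx => (hZ2 x).elim (absurd · hx.1) (absurd · hx.2),
    e_intCast_div_two, e_intCast_div_two, ZMod.val_zero, show (1 : ZMod 2).val = 1 from rfl]
  simp

lemma charSum_changeVars (pq : (Fin g → ℤ) × (Fin g → ℤ)) :
    charSum σ ε (changeVars σ ε pq).1 (changeVars σ ε pq).2 = 2 ^ g := by
  have hexp : ∀ i, lift σ i + (changeVars σ ε pq).1 i + (changeVars σ ε pq).2 i + lift ε i =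
      2 * (pq.1 i + lift σ i) := fun i => by
    simp only [changeVars, Pi.add_apply, Pi.sub_apply, Pi.mul_apply]
    ring
  calc charSum σ ε (changeVars σ ε pq).1 (changeVars σ ε pq).2 = ∏ _i : Fin g, (2 : ℂ) := by
        rw [charSum_eq_prod]
        exact Finset.prod_congr rfl fun i _ => by rw [hexp, _root_.zpow_mul]; norm_num
    _ = 2 ^ g := by simp

lemma charSum_eq_zero {n m : Fin g → ℤ} (h : (n, m) ∉ Set.range (changeVars σ ε)) :
    charSum σ ε n m = 0 := by
  obtain ⟨i, hi⟩ : ∃ i, ¬Even (lift σ i + n i + m i + lift ε i) := by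
    by_contra! h'
    exact h (mem_range_changeVars σ ε n m h')
  rw [charSum_eq_prod]
  refine Finset.prod_eq_zero (Finset.mem_univ i) ?_
  rw [(Int.not_even_iff_odd.mp hi).neg_one_zpow]
  ring

noncomputable def pairTerm (τ : Matrix (Fin g) (Fin g) ℂ) (nm : (Fin g → ℤ) × (Fin g → ℤ)) : ℂ :=
  e ((1 / 2) * Q τ (shiftPt ε nm.1) + (1 / 2) * Q τ (shiftPt ε nm.2)) * charSum σ ε nm.1 nm.2

variable {τ : Matrix (Fin g) (Fin g) ℂ}

lemma secondOrderTheta_mul_eq_tsum_pairTerm (hτ : (τ.map im).PosDef) :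
    secondOrderTheta g σ τ * secondOrderTheta g (σ + ε) τ =
      (2 : ℂ) ^ (-(g : ℤ)) * ∑' nm, pairTerm σ ε τ nm := by
  have hterm : ∀ pq : (Fin g → ℤ) × (Fin g → ℤ),
      e (Q τ (shiftPt σ pq.1)) * e (Q τ (shiftPt (σ + ε) pq.2)) =
        (2 : ℂ) ^ (-(g : ℤ)) * pairTerm σ ε τ (changeVars σ ε pq) := by
    rintro ⟨p, q⟩
    rw [pairTerm, charSum_changeVars, shiftPt_changeVars_fst, shiftPt_changeVars_snd, ← e_add,
      mul_left_comm, _root_.zpow_neg, zpow_natCast, inv_mul_cancel₀ (pow_ne_zero _ two_ne_zero),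
      mul_one]
    congr 1
    linear_combination -Q_add_add_Q_sub τ (shiftPt σ p) (shiftPt (σ + ε) q) / 2
  rw [secondOrderTheta_eq, secondOrderTheta_eq, tsum_mul_tsum_of_summable_norm
    (summable_norm_secondOrderTheta_term hτ σ) (summable_norm_secondOrderTheta_term hτ (σ + ε)),
    tsum_congr hterm, tsum_mul_left, (changeVars_injective σ ε).tsum_eq]
  exact Function.support_subset_iff'.mpr fun nm h => by
    rw [pairTerm, charSum_eq_zero σ ε h, mul_zero]

lemma sum_sign_mul_thetaConst_sq_eq_tsum_pairTerm (hτ : (τ.map im).PosDef) :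
    ∑ ε' : Fin g → ZMod 2, (-1 : ℂ) ^ (lift σ ⬝ᵥ lift ε') * thetaConst g ε ε' τ ^ 2 =
      ∑' nm, pairTerm σ ε τ nm := by
  set T : (Fin g → ZMod 2) → (Fin g → ℤ) → ℂ := fun ε' n =>
    e ((1 / 2) * Q τ (shiftPt ε n) + shiftPt ε n ⬝ᵥ halfVec ε')
  have hsq : ∀ ε', thetaConst g ε ε' τ ^ 2 =
      ∑' nm : (Fin g → ℤ) × (Fin g → ℤ), T ε' nm.1 * T ε' nm.2 := fun ε' => by
    rw [sq, thetaConst_eq, tsum_mul_tsum_of_summable_norm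
      (summable_norm_thetaConst_term hτ ε ε') (summable_norm_thetaConst_term hτ ε ε')]
  have hsummable : ∀ ε' ∈ (Finset.univ : Finset (Fin g → ZMod 2)),
      Summable fun nm : (Fin g → ℤ) × (Fin g → ℤ) =>
        (-1 : ℂ) ^ (lift σ ⬝ᵥ lift ε') * (T ε' nm.1 * T ε' nm.2) := fun ε' _ =>
    (summable_mul_of_summable_norm (summable_norm_thetaConst_term hτ ε ε')
      (summable_norm_thetaConst_term hτ ε ε')).mul_left _
  simp_rw [hsq, ← tsum_mul_left]
  rw [← Summable.tsum_finsetSum hsummable]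
  refine tsum_congr fun nm => ?_
  rw [pairTerm, charSum, Finset.mul_sum]
  refine Finset.sum_congr rfl fun ε' _ => ?_
  rw [← e_add, mul_left_comm, ← e_add, add_dotProduct]
  congr 2
  ring

end SiegelTheta

theorem riemann_bilinear_relation (σ ε : Fin g → ZMod 2)
    (τ : Matrix (Fin g) (Fin g) ℂ)
    (hτpos : (τ.map Complex.im).PosDef) :
    secondOrderTheta g σ τ * secondOrderTheta g (σ + ε) τ =
      (2 : ℂ) ^ (-(g : ℤ)) *
        ∑ ε' : Fin g → ZMod 2,
          (-1 : ℂ) ^ ((fun i => ((σ i).val : ℤ)) ⬝ᵥ (fun i => ((ε' i).val : ℤ))) *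
            (thetaConst g ε ε' τ) ^ 2 := by
  rw [SiegelTheta.secondOrderTheta_mul_eq_tsum_pairTerm σ ε hτpos]
  exact congrArg _ (SiegelTheta.sum_sign_mul_thetaConst_sq_eq_tsum_pairTerm σ ε hτpos).symm
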